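/- For any orthonormal basis {ψ_r}, r = 1,…,C(q,2), of Λ²V and any p-form ω on V, one has (1/4) Σ_r |[ψ_r, ω]|² = p(q−p)|ω|². -/

import Mathlib

open scoped BigOperators

namespace Paper

noncomputable section

/-- Coefficients of exterior forms w.r.t. the fixed orthonormal basis `e₁,…,e_q` of `V = ℝ^q`:
a form is identified with its family of coefficients indexed by subsets of `Fin q`. -/
abbrev Ext (q : ℕ) := Finset (Fin q) → ℝ

variable {q : ℕ}

/-- `(-1)^{#{j ∈ s | j < i}}` -/
def sgn (i : Fin q) (s : Finset (Fin q)) : ℝ := (-1 : ℝ) ^ (s.filter fun j => j < i).card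

/-- Exterior multiplication by the basis vector `e_i`. -/
def wB (i : Fin q) (ω : Ext q) : Ext q := fun s =>
  if i ∈ s then sgn i (s.erase i) * ω (s.erase i) else 0

/-- Interior product (contraction) with the basis vector `e_i`. -/
def iB (i : Fin q) (ω : Ext q) : Ext q := fun s =>
  if i ∈ s then 0 else sgn i s * ω (insert i s)

/-- The basis monomial `e_{i₁} ∧ ⋯ ∧ e_{i_p}`, for `s = {i₁ < ⋯ < i_p}`. -/
def bF (s : Finset (Fin q)) : Ext q := fun t => if t = s then 1 else 0

/-- The basis vector `e_i` of `V = ℝ^q`. -/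
def eB (i : Fin q) : Fin q → ℝ := Pi.single i 1

/-- Exterior multiplication by the vector `X ∈ V`. -/
def wV (X : Fin q → ℝ) (ω : Ext q) : Ext q := ∑ i, X i • wB i ω

/-- Interior product with the vector `X ∈ V`. -/
def iV (X : Fin q → ℝ) (ω : Ext q) : Ext q := ∑ i, X i • iB i ω

/-- Clifford multiplication `X · ω = X ∧ ω − X ⌟ ω` of a vector with a form. -/
def clV (X : Fin q → ℝ) (ω : Ext q) : Ext q := wV X ω - iV X ω

/-- Clifford multiplication `e_{i₁} · e_{i₂} ⋯ e_{i_p} · ω` for `s = {i₁ < ⋯ < i_p}`. -/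
def clB (s : Finset (Fin q)) (ω : Ext q) : Ext q :=
  (Finset.sort s (· ≤ ·)).foldr (fun i τ => clV (eB i) τ) ω

/-- Clifford multiplication of two forms. -/
def clM (ω₁ ω₂ : Ext q) : Ext q := ∑ s : Finset (Fin q), ω₁ s • clB s ω₂

/-- The bracket `[ω₁, ω₂] = ω₁ · ω₂ − ω₂ · ω₁`. -/
def brkt (ω₁ ω₂ : Ext q) : Ext q := clM ω₁ ω₂ - clM ω₂ ω₁

/-- Exterior multiplication by the monomial `e_{i₁} ∧ ⋯ ∧ e_{i_p}`. -/
def wBs (s : Finset (Fin q)) (ω : Ext q) : Ext q :=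
  (Finset.sort s (· ≤ ·)).foldr (fun i τ => wB i τ) ω

/-- The wedge product of two forms. -/
def wM (ω₁ ω₂ : Ext q) : Ext q := ∑ s : Finset (Fin q), ω₁ s • wBs s ω₂

/-- The inner product on forms, for which the basis monomials are orthonormal. -/
def ip (ω φ : Ext q) : ℝ := ∑ s : Finset (Fin q), ω s * φ s

/-- `ω` is a form of (pure) degree `p`. -/
def homog (p : ℕ) (ω : Ext q) : Prop := ∀ s : Finset (Fin q), s.card ≠ p → ω s = 0

/-- The inner product of two vectors of `V = ℝ^q`. -/
def dotP (X Y : Fin q → ℝ) : ℝ := ∑ i, X i * Y i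

/-- A vector of `V` regarded as a 1-form. -/
def oneF (X : Fin q → ℝ) : Ext q := ∑ i, X i • bF {i}

/-- The wedge `X ∧ Y` of two vectors. -/
def w2 (X Y : Fin q → ℝ) : Ext q := wV X (oneF Y)

/-- Two-element subsets, indexing the canonical orthonormal basis of `Λ²V`. -/
def twoSets (q : ℕ) : Finset (Finset (Fin q)) := Finset.univ.filter fun s => s.card = 2

/-- The Bochner operator quadratic form `⟨B_R^{[p]} ω, φ⟩ =
(1/4) Σ_{r,s} ⟨R ψ_r, ψ_s⟩ ⟨[ψ_r,ω],[ψ_s,φ]⟩`, computed in the canonical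
orthonormal basis `{e_i ∧ e_j}_{i<j}` of `Λ²V`. -/
def Bform (R : Ext q →ₗ[ℝ] Ext q) (ω φ : Ext q) : ℝ :=
  (1 / 4 : ℝ) * ∑ s ∈ twoSets q, ∑ t ∈ twoSets q,
    ip (R (bF s)) (bF t) * ip (brkt (bF s) ω) (brkt (bF t) φ)

/-!
The bracket is linear in its first argument and `Σ_r ψ_r ⊗ ψ_r` does not depend on the
orthonormal basis (a square matrix with orthonormal rows has orthonormal columns), so we may take
`ψ` to be the basis `e_s`, `#s = 2`. Left Clifford multiplication by `e_s` maps `e_t` to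
`± e_{s ∆ t}`, hence is an isometry, and `e_t · e_s = (-1)^{#s #t + #(s ∩ t)} e_s · e_t`.
For `#s = 2` this gives `[e_s, e_t] = (1 - (-1)^{#(s ∩ t)}) e_s · e_t`, which is `2 e_s · e_t`
when `s` meets `t` in one point and `0` otherwise. So `(1/4) Σ_s |[e_s, ω]|² = Σ_t N_t ω_t²`,
where `N_t = #t · (q - #t)` counts the pairs `s` meeting `t` in exactly one point.
-/

open Finset Matrix
open scoped symmDiff

lemma ip_eq_dotProduct (ω φ : Ext q) : ip ω φ = ω ⬝ᵥ φ := rfl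

lemma sum_smul_dotProduct_sum_smul {ι κ m : Type*} [Fintype m] (S : Finset ι) (T : Finset κ)
    (a : ι → ℝ) (b : κ → ℝ) (β : ι → m → ℝ) (γ : κ → m → ℝ) :
    (∑ s ∈ S, a s • β s) ⬝ᵥ (∑ t ∈ T, b t • γ t)
      = ∑ s ∈ S, ∑ t ∈ T, a s * b t * (β s ⬝ᵥ γ t) := by
  rw [sum_dotProduct]
  refine sum_congr rfl fun s _ => ?_
  rw [smul_dotProduct, dotProduct_sum, smul_eq_mul, mul_sum]
  refine sum_congr rfl fun t _ => ?_
  rw [dotProduct_smul, smul_eq_mul]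
  ring

lemma sum_smul_dotProduct_self_of_orthonormal {ι m : Type*} [Fintype m] [DecidableEq ι]
    (S : Finset ι) (a : ι → ℝ) (β : ι → m → ℝ)
    (hβ : ∀ i ∈ S, ∀ j ∈ S, β i ⬝ᵥ β j = if i = j then 1 else 0) :
    (∑ i ∈ S, a i • β i) ⬝ᵥ (∑ i ∈ S, a i • β i) = ∑ i ∈ S, a i ^ 2 := by
  rw [sum_smul_dotProduct_sum_smul]
  refine sum_congr rfl fun i hi => ?_
  rw [sum_congr rfl fun j hj => by rw [hβ i hi j hj], sum_eq_single_of_mem i hi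
    fun j _ hji => by rw [if_neg hji.symm, mul_zero], if_pos rfl, mul_one, sq]

lemma sum_dotProduct_self_of_orthonormal_columns {ι κ m : Type*} [Fintype ι] [Fintype m]
    [DecidableEq κ] (T : Finset κ) (a : ι → κ → ℝ) (β : κ → m → ℝ)
    (ha : ∀ s ∈ T, ∀ t ∈ T, ∑ r, a r s * a r t = if s = t then 1 else 0) :
    ∑ r, (∑ s ∈ T, a r s • β s) ⬝ᵥ (∑ s ∈ T, a r s • β s)
      = ∑ s ∈ T, β s ⬝ᵥ β s := by
  simp only [sum_smul_dotProduct_sum_smul]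
  rw [sum_comm]
  refine sum_congr rfl fun s hs => ?_
  rw [sum_comm]
  simp only [← sum_mul]
  rw [sum_congr rfl fun t ht => by rw [ha s hs t ht], sum_eq_single_of_mem s hs
    fun t _ hts => by rw [if_neg hts.symm, zero_mul], if_pos rfl, one_mul]

lemma bF_eq_single (s : Finset (Fin q)) : bF s = Pi.single s 1 := by
  funext t
  simp [bF, Pi.single_apply]

lemma bF_dotProduct_bF (s t : Finset (Fin q)) : bF s ⬝ᵥ bF t = if s = t then 1 else 0 := by
  simp [bF_eq_single, Pi.single_apply, eq_comm]

lemma sum_smul_bF (ω : Ext q) : ∑ t, ω t • bF t = ω := by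
  funext u
  simp [bF]

lemma sgn_mul_self (i : Fin q) (t : Finset (Fin q)) : sgn i t * sgn i t = 1 := by
  rw [sgn, ← pow_add, Even.neg_one_pow ⟨_, rfl⟩]

lemma sgn_erase_self (i : Fin q) (t : Finset (Fin q)) : sgn i (t.erase i) = sgn i t := by
  simp [sgn, filter_erase]

lemma sgn_insert (i : Fin q) {j : Fin q} {t : Finset (Fin q)} (hj : j ∉ t) :
    sgn i (insert j t) = (if j < i then -1 else 1) * sgn i t := by
  rw [sgn, sgn, filter_insert]
  split_ifs with h
  · rw [card_insert_of_notMem (by simp [hj]), pow_succ, mul_comm]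
  · rw [one_mul]

lemma symmDiff_singleton_of_mem {i : Fin q} {t : Finset (Fin q)} (h : i ∈ t) :
    t ∆ {i} = t.erase i := by
  ext a
  by_cases ha : a = i <;> simp [mem_symmDiff, ha, h]

lemma symmDiff_singleton_of_notMem {i : Fin q} {t : Finset (Fin q)} (h : i ∉ t) :
    t ∆ {i} = insert i t := by
  ext a
  by_cases ha : a = i <;> simp [mem_symmDiff, ha, h]

lemma sgn_symmDiff_singleton (i j : Fin q) (t : Finset (Fin q)) :
    sgn i (t ∆ {j}) = (if j < i then -1 else 1) * sgn i t := by
  by_cases hj : j ∈ t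
  · conv_rhs => rw [← insert_erase hj, sgn_insert i (notMem_erase j t)]
    rw [symmDiff_singleton_of_mem hj, ← mul_assoc]
    split_ifs <;> norm_num
  · rw [symmDiff_singleton_of_notMem hj, sgn_insert i hj]

def cliffordSign (i : Fin q) (t : Finset (Fin q)) : ℝ := (if i ∈ t then -1 else 1) * sgn i t

lemma cliffordSign_mul_self (i : Fin q) (t : Finset (Fin q)) :
    cliffordSign i t * cliffordSign i t = 1 := by
  have := sgn_mul_self i t
  unfold cliffordSign
  split_ifs <;> linear_combination this

lemma cliffordSign_symmDiff_singleton {i j : Fin q} (hij : i ≠ j) (t : Finset (Fin q)) :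
    cliffordSign i (t ∆ {j}) = (if j < i then -1 else 1) * cliffordSign i t := by
  have hmem : i ∈ t ∆ {j} ↔ i ∈ t := by simp [mem_symmDiff, hij]
  rw [cliffordSign, cliffordSign, if_congr hmem rfl rfl, sgn_symmDiff_singleton]
  ring

def cliffordE (i : Fin q) : Ext q →ₗ[ℝ] Ext q where
  toFun ω := wB i ω - iB i ω
  map_add' ω φ := by
    funext s
    by_cases h : i ∈ s <;> simp [wB, iB, h] <;> ring
  map_smul' a ω := by
    funext s
    by_cases h : i ∈ s <;> simp [wB, iB, h] <;> ring

lemma clV_eB (i : Fin q) (ω : Ext q) : clV (eB i) ω = cliffordE i ω := by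
  have hw : wV (eB i) ω = wB i ω := by simp [wV, eB, Pi.single_apply]
  have hi : iV (eB i) ω = iB i ω := by simp [iV, eB, Pi.single_apply]
  rw [clV, hw, hi]
  rfl

lemma wB_bF (i : Fin q) (t : Finset (Fin q)) :
    wB i (bF t) = if i ∈ t then 0 else sgn i t • bF (insert i t) := by
  funext u
  by_cases hu : i ∈ u
  · have : u.erase i = t ↔ i ∉ t ∧ u = insert i t := by
      constructor
      · rintro rfl
        exact ⟨notMem_erase i u, (insert_erase hu).symm⟩
      · rintro ⟨ht, rfl⟩
        exact erase_insert ht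
    by_cases ht : i ∈ t <;> by_cases he : u.erase i = t <;> simp_all [wB, bF, sgn_erase_self]
  · have : u ≠ insert i t := fun h => hu (h ▸ mem_insert_self i t)
    by_cases ht : i ∈ t <;> simp [wB, bF, hu, ht, this]

lemma iB_bF (i : Fin q) (t : Finset (Fin q)) :
    iB i (bF t) = if i ∈ t then sgn i t • bF (t.erase i) else 0 := by
  funext u
  by_cases hu : i ∈ u
  · have : u ≠ t.erase i := fun h => notMem_erase i t (h ▸ hu)
    by_cases ht : i ∈ t <;> simp [iB, bF, hu, ht, this]
  · have : insert i u = t ↔ i ∈ t ∧ u = t.erase i := by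
      constructor
      · rintro rfl
        exact ⟨mem_insert_self i u, (erase_insert hu).symm⟩
      · rintro ⟨ht, rfl⟩
        exact insert_erase ht
    by_cases ht : i ∈ t <;> by_cases he : u = t.erase i <;> simp_all [iB, bF, sgn_erase_self]

lemma cliffordE_bF (i : Fin q) (t : Finset (Fin q)) :
    cliffordE i (bF t) = cliffordSign i t • bF (t ∆ {i}) := by
  change wB i (bF t) - iB i (bF t) = _
  rw [wB_bF, iB_bF, cliffordSign]
  by_cases h : i ∈ t
  · simp [h, symmDiff_singleton_of_mem h]
  · simp [h, symmDiff_singleton_of_notMem h]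

lemma cliffordE_mul_cliffordE_of_ne {i j : Fin q} (hij : i ≠ j) :
    cliffordE i * cliffordE j = (-1 : ℝ) • (cliffordE j * cliffordE i) := by
  have hbasis : ∀ t,
      cliffordE i (cliffordE j (bF t)) = (-1 : ℝ) • cliffordE j (cliffordE i (bF t)) := by
    intro t
    simp only [cliffordE_bF, map_smul, smul_smul, symmDiff_right_comm t {j} {i},
      cliffordSign_symmDiff_singleton hij, cliffordSign_symmDiff_singleton hij.symm]
    congr 1
    rcases hij.lt_or_gt with h | h <;> simp [h, h.not_gt, mul_comm]
  refine LinearMap.ext fun ω => ?_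
  rw [← sum_smul_bF ω]
  simp [map_sum, hbasis]

def cliffordProd (l : List (Fin q)) : Module.End ℝ (Ext q) := (l.map cliffordE).prod

@[simp] lemma cliffordProd_nil : cliffordProd ([] : List (Fin q)) = 1 := rfl

@[simp] lemma cliffordProd_cons (i : Fin q) (l : List (Fin q)) :
    cliffordProd (i :: l) = cliffordE i * cliffordProd l := rfl

lemma clB_eq_cliffordProd (s : Finset (Fin q)) (ω : Ext q) :
    clB s ω = cliffordProd (sort s) ω := by
  rw [clB, cliffordProd]
  induction sort s with
  | nil => rfl
  | cons i l ih => rw [List.foldr_cons, ih, clV_eB]; rfl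

lemma cliffordE_mul_cliffordProd (i : Fin q) (l : List (Fin q)) :
    cliffordE i * cliffordProd l
      = (-1 : ℝ) ^ l.countP (· ≠ i) • (cliffordProd l * cliffordE i) := by
  induction l with
  | nil => simp
  | cons j l ih =>
    rw [cliffordProd_cons]
    by_cases h : j = i
    · subst h
      rw [List.countP_cons_of_neg (by simp), mul_assoc, ← mul_smul_comm, ← ih]
    · rw [← mul_assoc, cliffordE_mul_cliffordE_of_ne (Ne.symm h), smul_mul_assoc, mul_assoc, ih,
        mul_smul_comm, smul_smul, List.countP_cons_of_pos (by simpa using h), pow_succ', mul_assoc]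

lemma cliffordProd_mul_cliffordProd (l₁ l₂ : List (Fin q)) :
    cliffordProd l₁ * cliffordProd l₂
      = (-1 : ℝ) ^ (l₁.map fun i => l₂.countP (· ≠ i)).sum
          • (cliffordProd l₂ * cliffordProd l₁) := by
  induction l₁ with
  | nil => simp
  | cons i l ih =>
    rw [cliffordProd_cons, mul_assoc, ih, mul_smul_comm, ← mul_assoc, cliffordE_mul_cliffordProd,
      smul_mul_assoc, smul_smul, List.map_cons, List.sum_cons, ← pow_add, add_comm, mul_assoc]

lemma cliffordProd_bF {l : List (Fin q)} (hl : l.Nodup) (t : Finset (Fin q)) :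
    ∃ c : ℝ, c * c = 1 ∧ cliffordProd l (bF t) = c • bF (l.toFinset ∆ t) := by
  induction l with
  | nil => exact ⟨1, one_mul 1, by simp [← bot_eq_empty]⟩
  | cons i l ih =>
    obtain ⟨c, hc, hl'⟩ := ih hl.of_cons
    have hi : i ∉ l.toFinset := by simpa using (List.nodup_cons.mp hl).1
    refine ⟨c * cliffordSign i (l.toFinset ∆ t), ?_, ?_⟩
    · rw [mul_mul_mul_comm, hc, cliffordSign_mul_self, one_mul]
    · rw [cliffordProd_cons, Module.End.mul_apply, hl', map_smul, cliffordE_bF, smul_smul,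
        symmDiff_right_comm, symmDiff_singleton_of_notMem hi, List.toFinset_cons]

lemma cliffordProd_bF_empty {l : List (Fin q)} (hl : l.Pairwise (· < ·)) :
    cliffordProd l (bF ∅) = bF l.toFinset := by
  induction l with
  | nil => rfl
  | cons i l ih =>
    have hlt : ∀ j ∈ l.toFinset, i < j := by simpa using (List.pairwise_cons.mp hl).1
    have hi : i ∉ l.toFinset := fun h => lt_irrefl i (hlt i h)
    have hsign : cliffordSign i l.toFinset = 1 := by
      rw [cliffordSign, sgn, filter_false_of_mem fun j hj => (hlt j hj).not_gt]
      simp [hi]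
    rw [cliffordProd_cons, Module.End.mul_apply, ih hl.of_cons, cliffordE_bF, hsign, one_smul,
      symmDiff_singleton_of_notMem hi, List.toFinset_cons]

lemma cliffordProd_sort_bF_empty (s : Finset (Fin q)) :
    cliffordProd (sort s) (bF ∅) = bF s := by
  rw [cliffordProd_bF_empty (sortedLT_sort s).pairwise, sort_toFinset]

lemma countP_sort_ne (s : Finset (Fin q)) (i : Fin q) :
    (sort s).countP (· ≠ i) = (s.erase i).card := by
  rw [← Multiset.coe_countP, sort_eq, Multiset.countP_eq_card_filter, ← filter_val, filter_ne',
    card_val]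

lemma sum_sort_map {M : Type*} [AddCommMonoid M] (s : Finset (Fin q)) (f : Fin q → M) :
    ((sort s).map f).sum = ∑ i ∈ s, f i := by
  rw [sum_eq_multiset_sum, ← sort_eq s (· ≤ ·), Multiset.map_coe, Multiset.sum_coe]

lemma neg_one_pow_sum_card_erase (s t : Finset (Fin q)) :
    (-1 : ℝ) ^ (∑ i ∈ t, (s.erase i).card) = (-1) ^ (s.card * t.card + (s ∩ t).card) := by
  have hcount : ∑ i ∈ t, (s.erase i).card + (s ∩ t).card = s.card * t.card := by
    have h : ∀ i ∈ t, (s.erase i).card + (if i ∈ s then 1 else 0) = s.card := fun i _ => by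
      split_ifs with hi
      · exact card_erase_add_one hi
      · rw [erase_eq_of_notMem hi, add_zero]
    rw [inter_comm, ← filter_mem_eq_inter, card_filter, ← sum_add_distrib, sum_congr rfl h,
      sum_const, smul_eq_mul, mul_comm]
  rw [← hcount, add_assoc, pow_add, ← two_mul, pow_mul]
  norm_num

lemma clB_bF_comm (s t : Finset (Fin q)) :
    clB t (bF s) = (-1 : ℝ) ^ (s.card * t.card + (s ∩ t).card) • clB s (bF t) := by
  rw [clB_eq_cliffordProd, clB_eq_cliffordProd, ← cliffordProd_sort_bF_empty s,
    ← cliffordProd_sort_bF_empty t, ← Module.End.mul_apply, cliffordProd_mul_cliffordProd,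
    LinearMap.smul_apply, Module.End.mul_apply]
  simp only [countP_sort_ne, sum_sort_map, neg_one_pow_sum_card_erase]

lemma clB_bF_dotProduct_clB_bF (s t u : Finset (Fin q)) :
    clB s (bF t) ⬝ᵥ clB s (bF u) = if t = u then 1 else 0 := by
  simp only [clB_eq_cliffordProd]
  obtain ⟨c, hc, hct⟩ := cliffordProd_bF (sort_nodup s (· ≤ ·)) t
  by_cases h : t = u
  · subst h
    rw [hct, smul_dotProduct, dotProduct_smul, bF_dotProduct_bF, if_pos rfl, if_pos rfl,
      smul_eq_mul, smul_eq_mul, mul_one, hc]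
  · obtain ⟨d, -, hdu⟩ := cliffordProd_bF (sort_nodup s (· ≤ ·)) u
    rw [hct, hdu, smul_dotProduct, dotProduct_smul, bF_dotProduct_bF,
      if_neg ((symmDiff_right_injective _).ne h), if_neg h, smul_zero, smul_zero]

lemma clB_eq_sum (s : Finset (Fin q)) (ω : Ext q) : clB s ω = ∑ t, ω t • clB s (bF t) := by
  conv_lhs => rw [← sum_smul_bF ω]
  simp only [clB_eq_cliffordProd, map_sum, map_smul]

lemma clM_bF_left (s : Finset (Fin q)) (ω : Ext q) : clM (bF s) ω = clB s ω := by
  simp [clM, bF]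

lemma brkt_eq_sum (ψ ω : Ext q) : brkt ψ ω = ∑ s, ψ s • brkt (bF s) ω := by
  have hright : clM ω ψ = ∑ s, ψ s • clM ω (bF s) := by
    simp only [clM, clB_eq_sum _ ψ, smul_sum, smul_smul]
    rw [sum_comm]
    exact sum_congr rfl fun _ _ => sum_congr rfl fun _ _ => by rw [mul_comm]
  simp only [brkt, clM_bF_left, smul_sub, sum_sub_distrib, hright]
  rfl

lemma brkt_bF {s : Finset (Fin q)} (hs : s.card = 2) (ω : Ext q) :
    brkt (bF s) ω = ∑ t, (ω t * (1 - (-1) ^ (s ∩ t).card)) • clB s (bF t) := by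
  have hsign : ∀ t : Finset (Fin q), (-1 : ℝ) ^ (s.card * t.card + (s ∩ t).card)
      = (-1) ^ (s ∩ t).card := fun t => by rw [hs, pow_add, pow_mul]; norm_num
  rw [brkt, clM_bF_left, clB_eq_sum, clM, ← sum_sub_distrib]
  refine sum_congr rfl fun t _ => ?_
  rw [clB_bF_comm s t, hsign, smul_smul, ← sub_smul, mul_sub, mul_one]

lemma mem_twoSets {s : Finset (Fin q)} : s ∈ twoSets q ↔ s.card = 2 := by
  simp [twoSets]

lemma card_twoSets : (twoSets q).card = q.choose 2 := by
  rw [twoSets, ← powerset_univ, ← powersetCard_eq_filter, card_powersetCard, card_univ,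
    Fintype.card_fin]

lemma sum_mul_eq_ite_of_orthonormal (ψ : Fin (q.choose 2) → Ext q) (hψ : ∀ r, homog 2 (ψ r))
    (hon : ∀ r s, ip (ψ r) (ψ s) = if r = s then 1 else 0) :
    ∀ s ∈ twoSets q, ∀ t ∈ twoSets q, ∑ r, ψ r s * ψ r t = if s = t then 1 else 0 := by
  let A : Matrix (Fin (q.choose 2)) (twoSets q) ℝ := Matrix.of fun r s => ψ r s
  have hrows : A * Aᵀ = 1 := by
    ext r r'
    calc (A * Aᵀ) r r' = ∑ s ∈ twoSets q, ψ r s * ψ r' s :=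
          sum_coe_sort (twoSets q) fun s => ψ r s * ψ r' s
      _ = ip (ψ r) (ψ r') := by
          refine sum_filter_of_ne fun s _ h => not_not.mp fun hs => h ?_
          rw [hψ r s hs, zero_mul]
      _ = (1 : Matrix _ _ ℝ) r r' := by rw [hon, Matrix.one_apply]
  have e : Fin (q.choose 2) ≃ twoSets q :=
    (Fintype.equivFinOfCardEq (by simp [card_twoSets])).symm
  have hcols := Matrix.mul_eq_one_comm_of_equiv e |>.mp hrows
  intro s hs t ht
  simpa [A, Matrix.mul_apply, Matrix.one_apply] using
    congrFun (congrFun hcols ⟨s, hs⟩) ⟨t, ht⟩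

lemma filter_twoSets_card_inter_eq_one (t : Finset (Fin q)) :
    (twoSets q).filter (fun s => (s ∩ t).card = 1)
      = (t ×ˢ tᶜ).image fun x => {x.1, x.2} := by
  ext s
  simp only [mem_filter, mem_twoSets, mem_image, mem_product, mem_compl, Prod.exists]
  constructor
  · rintro ⟨hs, hst⟩
    obtain ⟨a, b, hab, rfl⟩ := card_eq_two.mp hs
    by_cases ha : a ∈ t <;> by_cases hb : b ∈ t
    · simp [insert_inter_of_mem, ha, hb, hab] at hst
    · exact ⟨a, b, ⟨ha, hb⟩, rfl⟩
    · exact ⟨b, a, ⟨hb, ha⟩, pair_comm b a⟩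
    · simp [insert_inter_of_notMem, ha, hb] at hst
  · rintro ⟨a, b, ⟨ha, hb⟩, rfl⟩
    have hab : a ≠ b := fun h => hb (h ▸ ha)
    refine ⟨card_pair hab, ?_⟩
    rw [insert_inter_of_mem ha, singleton_inter_of_notMem hb, insert_empty, card_singleton]

lemma card_filter_twoSets_card_inter_eq_one (t : Finset (Fin q)) :
    ((twoSets q).filter fun s => (s ∩ t).card = 1).card = t.card * tᶜ.card := by
  rw [filter_twoSets_card_inter_eq_one, card_image_of_injOn, card_product]
  rintro ⟨a, b⟩ hab ⟨a', b'⟩ hab' h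
  simp only [coe_product, Set.mem_prod, mem_coe, coe_compl, Set.mem_compl_iff] at hab hab' h
  have ha : a ∈ ({a', b'} : Finset (Fin q)) := h ▸ mem_insert_self a {b}
  have hb : b ∈ ({a', b'} : Finset (Fin q)) := h ▸ mem_insert_of_mem (mem_singleton_self b)
  simp only [mem_insert, mem_singleton] at ha hb
  grind

lemma sum_twoSets_one_sub_neg_one_pow_sq (t : Finset (Fin q)) :
    ∑ s ∈ twoSets q, (1 - (-1 : ℝ) ^ (s ∩ t).card) ^ 2
      = 4 * (t.card : ℝ) * tᶜ.card := by
  have hterm : ∀ s ∈ twoSets q,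
      (1 - (-1 : ℝ) ^ (s ∩ t).card) ^ 2 = if (s ∩ t).card = 1 then 4 else 0 := by
    intro s hs
    have : (s ∩ t).card ≤ 2 := mem_twoSets.mp hs ▸ card_le_card inter_subset_left
    interval_cases (s ∩ t).card <;> norm_num
  rw [sum_congr rfl hterm, ← sum_filter, sum_const, card_filter_twoSets_card_inter_eq_one,
    nsmul_eq_mul]
  push_cast
  ring

lemma brkt_eq_sum_twoSets {ψ : Ext q} (hψ : homog 2 ψ) (ω : Ext q) :
    brkt ψ ω = ∑ s ∈ twoSets q, ψ s • brkt (bF s) ω := by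
  rw [brkt_eq_sum, twoSets]
  refine (sum_filter_of_ne fun s _ h => not_not.mp fun hs => h ?_).symm
  rw [hψ s hs, zero_smul]

lemma brkt_bF_dotProduct_self {s : Finset (Fin q)} (hs : s.card = 2) (ω : Ext q) :
    brkt (bF s) ω ⬝ᵥ brkt (bF s) ω = ∑ t, ω t ^ 2 * (1 - (-1) ^ (s ∩ t).card) ^ 2 := by
  rw [brkt_bF hs, sum_smul_dotProduct_self_of_orthonormal _ _ _
    fun t _ u _ => clB_bF_dotProduct_clB_bF s t u]
  simp only [mul_pow]

lemma sum_twoSets_brkt_bF_dotProduct_self (ω : Ext q) :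
    ∑ s ∈ twoSets q, brkt (bF s) ω ⬝ᵥ brkt (bF s) ω
      = 4 * ∑ t, (t.card * tᶜ.card : ℝ) * ω t ^ 2 := by
  rw [sum_congr rfl fun s hs => brkt_bF_dotProduct_self (mem_twoSets.mp hs) ω, sum_comm, mul_sum]
  refine sum_congr rfl fun t _ => ?_
  rw [← mul_sum, sum_twoSets_one_sub_neg_one_pow_sq]
  ring

theorem statement_2_general {q p : ℕ}
    (ψ : Fin (Nat.choose q 2) → Ext q)
    (hψ : ∀ r, homog 2 (ψ r))
    (hon : ∀ r s, ip (ψ r) (ψ s) = if r = s then 1 else 0)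
    (ω : Ext q) (hω : homog p ω) :
    (1 / 4 : ℝ) * ∑ r, ip (brkt (ψ r) ω) (brkt (ψ r) ω)
      = (p : ℝ) * ((q : ℝ) - (p : ℝ)) * ip ω ω := by
  have hdeg : ∀ t : Finset (Fin q),
      (t.card * tᶜ.card : ℝ) * ω t ^ 2 = p * (q - p) * ω t ^ 2 := by
    intro t
    by_cases ht : t.card = p
    · subst ht
      have hle : t.card ≤ q := by simpa using card_le_univ t
      rw [card_compl, Fintype.card_fin, Nat.cast_sub hle]
    · rw [hω t ht]
      ring
  calc (1 / 4 : ℝ) * ∑ r, ip (brkt (ψ r) ω) (brkt (ψ r) ω)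
      = (1 / 4) * ∑ s ∈ twoSets q, brkt (bF s) ω ⬝ᵥ brkt (bF s) ω := by
        simp only [ip_eq_dotProduct, brkt_eq_sum_twoSets (hψ _)]
        rw [sum_dotProduct_self_of_orthonormal_columns _ _ _
          (sum_mul_eq_ite_of_orthonormal ψ hψ hon)]
    _ = ∑ t, p * (q - p) * ω t ^ 2 := by
        rw [sum_twoSets_brkt_bF_dotProduct_self, sum_congr rfl fun t _ => hdeg t]
        ring
    _ = p * (q - p) * ip ω ω := by
        rw [ip, mul_sum]
        simp only [sq]

/-- Equation (3.5) of the paper. For any orthonormal basis `{ψ_r}` of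
`Λ²V` and any `p`-form `ω`, `(1/4) Σ_r |[ψ_r, ω]|² = p(q−p)|ω|²`. -/
theorem statement_2 {q p : ℕ} (hq : 1 ≤ q)
    (ψ : Fin (Nat.choose q 2) → Ext q)
    (hψ : ∀ r, homog 2 (ψ r))
    (hon : ∀ r s, ip (ψ r) (ψ s) = if r = s then 1 else 0)
    (ω : Ext q) (hω : homog p ω) :
    (1 / 4 : ℝ) * ∑ r, ip (brkt (ψ r) ω) (brkt (ψ r) ω)
      = (p : ℝ) * ((q : ℝ) - (p : ℝ)) * ip ω ω :=
  statement_2_general ψ hψ hon ω hω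

end
end Paper
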